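/- arXiv:2212.04484 — 3 statements merged into one kernel-verified Lean document; each statement's English description precedes it below -/
import Mathlib

section
/- (Hyers stability) If g : ℝ → ℂ satisfies |g(x+y) − g(x) − g(y)| ≤ θ for all real x, y (with θ ≥ 0), then the limit G(x) := lim_{n→∞} 2^{−n} g(2^n x) exists for every x, G is additive (G(x+y) = G(x) + G(y)), and |g(x) − G(x)| ≤ θ for all x. Moreover G is the unique additive function with this property. -/
/-!
Since `‖f (2y) - 2 f y‖ ≤ θ`, consecutive terms of `2⁻ⁿ f (2ⁿ x)` differ by at most `θ 2⁻ⁿ⁻¹`,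
so the sequence is Cauchy and, summing the geometric series, its limit lies within `θ` of `f x`.
The defect `f (x + y) - f x - f y` is divided by `2ⁿ` along the sequence, so the limit is additive.
Any additive `F` within `θ` of `f` commutes with doubling, so `2⁻ⁿ (f - F) (2ⁿ x) → 0` forces the
sequence to converge to `F x` as well.
-/

open Filter Topology

section
variable {A E : Type*} [AddCommMonoid A] [NormedAddCommGroup E] [NormedSpace ℝ E]

noncomputable def hyersSeq (f : A → E) (x : A) (n : ℕ) : E := ((2 : ℝ) ^ n)⁻¹ • f (2 ^ n • x)

lemma tendsto_inv_two_pow_smul_zero {u : ℕ → E} {C : ℝ} (hu : ∀ n, ‖u n‖ ≤ C) :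
    Tendsto (fun n => ((2 : ℝ) ^ n)⁻¹ • u n) atTop (𝓝 0) := by
  refine Tendsto.zero_smul_isBoundedUnder_le ?_ ⟨C, eventually_map.2 (.of_forall hu)⟩
  simpa only [inv_pow] using
    tendsto_pow_atTop_nhds_zero_of_lt_one (r := (2 : ℝ)⁻¹) (by norm_num) (by norm_num)

variable {f : A → E} {θ : ℝ}

lemma tendsto_hyersSeq_of_additive {F : A → E} (hF : ∀ x y, F (x + y) = F x + F y)
    (hfF : ∀ x, ‖f x - F x‖ ≤ θ) (x : A) : Tendsto (hyersSeq f x) atTop (𝓝 (F x)) := by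
  let F' : A →+ E := AddMonoidHom.mk' F hF
  have hsub (n : ℕ) :
      hyersSeq f x n - F x = ((2 : ℝ) ^ n)⁻¹ • (f (2 ^ n • x) - F (2 ^ n • x)) := by
    rw [smul_sub, hyersSeq, show F (2 ^ n • x) = 2 ^ n • F x from map_nsmul F' _ _]
    rw [← Nat.cast_smul_eq_nsmul ℝ (2 ^ n) (F x), smul_smul, Nat.cast_pow, Nat.cast_ofNat,
      inv_mul_cancel₀ (by positivity), one_smul]
  rw [← tendsto_sub_nhds_zero_iff]
  simpa only [hsub] using tendsto_inv_two_pow_smul_zero fun n => hfF _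

variable (h : ∀ x y, ‖f (x + y) - f x - f y‖ ≤ θ)
include h

lemma dist_hyersSeq_succ_le (x : A) (n : ℕ) :
    dist (hyersSeq f x n) (hyersSeq f x (n + 1)) ≤ θ / 2 * (1 / 2) ^ n := by
  set y := 2 ^ n • x
  have hdouble : 2 ^ (n + 1) • x = y + y := by rw [pow_succ, mul_two, add_nsmul]
  have : hyersSeq f x n - hyersSeq f x (n + 1) =
      -((2 : ℝ) ^ (n + 1))⁻¹ • (f (y + y) - f y - f y) := by
    simp only [hyersSeq, hdouble]
    module
  calc dist (hyersSeq f x n) (hyersSeq f x (n + 1))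
      = ((2 : ℝ) ^ (n + 1))⁻¹ * ‖f (y + y) - f y - f y‖ := by
        rw [dist_eq_norm, this, norm_smul, norm_neg, norm_inv, norm_pow, Real.norm_two]
    _ ≤ ((2 : ℝ) ^ (n + 1))⁻¹ * θ := by gcongr; exact h y y
    _ = θ / 2 * (1 / 2) ^ n := by rw [pow_succ, one_div, inv_pow]; ring

lemma cauchySeq_hyersSeq (x : A) : CauchySeq (hyersSeq f x) :=
  cauchySeq_of_le_geometric _ _ (by norm_num) (dist_hyersSeq_succ_le h x)

lemma norm_sub_le_of_tendsto_hyersSeq {x : A} {L : E} (hL : Tendsto (hyersSeq f x) atTop (𝓝 L)) :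
    ‖f x - L‖ ≤ θ := by
  have := dist_le_of_le_geometric_of_tendsto₀ _ _ (by norm_num) (dist_hyersSeq_succ_le h x) hL
  rwa [hyersSeq, pow_zero, pow_zero, inv_one, one_smul, one_nsmul, dist_eq_norm,
    show θ / 2 / (1 - 1 / 2) = θ by ring] at this

lemma tendsto_hyersSeq_add_sub_sub (x y : A) :
    Tendsto (fun n => hyersSeq f (x + y) n - hyersSeq f x n - hyersSeq f y n) atTop (𝓝 0) := by
  simp only [hyersSeq, nsmul_add, ← smul_sub]
  exact tendsto_inv_two_pow_smul_zero fun n => h _ _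

lemma add_of_tendsto_hyersSeq {G : A → E} (hG : ∀ x, Tendsto (hyersSeq f x) atTop (𝓝 (G x)))
    (x y : A) : G (x + y) = G x + G y := by
  have := tendsto_nhds_unique (((hG (x + y)).sub (hG x)).sub (hG y))
    (tendsto_hyersSeq_add_sub_sub h x y)
  rwa [sub_sub, sub_eq_zero] at this

end

theorem hyers_stability_general (θ : ℝ) (g : ℝ → ℂ)
    (h : ∀ x y : ℝ, ‖g (x + y) - g x - g y‖ ≤ θ) :
    ∃ G : ℝ → ℂ,
      (∀ x y : ℝ, G (x + y) = G x + G y) ∧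
      (∀ x : ℝ, ‖g x - G x‖ ≤ θ) ∧
      (∀ x : ℝ, Tendsto (fun n : ℕ => g (2 ^ n * x) / (2 ^ n : ℂ)) atTop (nhds (G x))) ∧
      (∀ G' : ℝ → ℂ, (∀ x y : ℝ, G' (x + y) = G' x + G' y) →
        (∀ x : ℝ, ‖g x - G' x‖ ≤ θ) → G' = G) := by
  choose G hG using fun x => cauchySeq_tendsto_of_complete (cauchySeq_hyersSeq h x)
  have hseq : ∀ x, hyersSeq g x = fun n : ℕ => g (2 ^ n * x) / (2 ^ n : ℂ) := fun x => by
    ext n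
    simp [hyersSeq, nsmul_eq_mul, div_eq_inv_mul]
  refine ⟨G, add_of_tendsto_hyersSeq h hG, fun x => norm_sub_le_of_tendsto_hyersSeq h (hG x),
    fun x => hseq x ▸ hG x, fun G' hG' hgG' => ?_⟩
  funext x
  exact tendsto_nhds_unique (tendsto_hyersSeq_of_additive hG' hgG' x) (hG x)

/-- Hyers' stability theorem: if `g : ℝ → ℂ` is θ-additive, then
`G(x) = lim_{n→∞} 2^{−n} g(2^n x)` exists, `G` is additive,
`|g(x) − G(x)| ≤ θ` for all `x`, and `G` is the unique such additive function. -/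
theorem hyers_stability (θ : ℝ) (hθ : 0 ≤ θ) (g : ℝ → ℂ)
    (h : ∀ x y : ℝ, ‖g (x + y) - g x - g y‖ ≤ θ) :
    ∃ G : ℝ → ℂ,
      (∀ x y : ℝ, G (x + y) = G x + G y) ∧
      (∀ x : ℝ, ‖g x - G x‖ ≤ θ) ∧
      (∀ x : ℝ, Tendsto (fun n : ℕ => g (2 ^ n * x) / (2 ^ n : ℂ)) atTop (nhds (G x))) ∧
      (∀ G' : ℝ → ℂ, (∀ x y : ℝ, G' (x + y) = G' x + G' y) →
        (∀ x : ℝ, ‖g x - G' x‖ ≤ θ) → G' = G) :=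
  hyers_stability_general θ g h
end

section
/- If g : ℝ≥0 → ℂ is θ-additive on the nonnegative reals (i.e., |g(x+y) − g(x) − g(y)| ≤ θ for all x, y ≥ 0), then there exists an additive function G : ℝ → ℂ such that |g(x) − G(x)| ≤ θ for all x ≥ 0. -/
/-!
Hyers' limit `G x = lim f (2ⁿ x) / 2ⁿ` exists on any commutative monoid: consecutive terms differ
by `θ / 2ⁿ⁺¹`, which also bounds `‖f x - G x‖` by `θ`, and `G` is additive because the additivity
defect of `f (2ⁿ ·) / 2ⁿ` is at most `θ / 2ⁿ`. Applied to `ℝ≥0`, this gives an additive map there,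
which extends to `ℝ` as `x ↦ G x⁺ - G x⁻`.
-/

open Filter Topology
open scoped NNReal

namespace Hyers

variable {M E : Type*} [AddCommMonoid M] [NormedAddCommGroup E] [NormedSpace ℝ E]

noncomputable def seq (f : M → E) (x : M) (n : ℕ) : E :=
  ((2 : ℝ) ^ n)⁻¹ • f (2 ^ n • x)

variable {f : M → E} {θ : ℝ}

theorem norm_seq_sub_seq_succ_le (hf : ∀ x y, ‖f (x + y) - f x - f y‖ ≤ θ) (x : M) (n : ℕ) :
    ‖seq f x n - seq f x (n + 1)‖ ≤ θ / 2 / 2 ^ n := by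
  set y := 2 ^ n • x
  have hdouble : 2 ^ (n + 1) • x = y + y := by rw [pow_succ, mul_comm, mul_smul, two_nsmul]
  have hdiff : seq f x n - seq f x (n + 1) = -((2 : ℝ) ^ (n + 1))⁻¹ • (f (y + y) - f y - f y) := by
    rw [seq, seq, hdouble]
    module
  calc ‖seq f x n - seq f x (n + 1)‖ = ((2 : ℝ) ^ (n + 1))⁻¹ * ‖f (y + y) - f y - f y‖ := by
        rw [hdiff, norm_smul, norm_neg, norm_inv, norm_pow, Real.norm_ofNat]
    _ ≤ ((2 : ℝ) ^ (n + 1))⁻¹ * θ := by gcongr; exact hf y y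
    _ = θ / 2 / 2 ^ n := by rw [pow_succ]; field_simp

theorem norm_seq_add_sub_le (hf : ∀ x y, ‖f (x + y) - f x - f y‖ ≤ θ) (x y : M) (n : ℕ) :
    ‖seq f (x + y) n - seq f x n - seq f y n‖ ≤ θ / 2 ^ n := by
  calc ‖seq f (x + y) n - seq f x n - seq f y n‖
        = ((2 : ℝ) ^ n)⁻¹ * ‖f (2 ^ n • x + 2 ^ n • y) - f (2 ^ n • x) - f (2 ^ n • y)‖ := by
        rw [seq, seq, seq, nsmul_add, ← smul_sub, ← smul_sub, norm_smul, norm_inv, norm_pow,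
          Real.norm_ofNat]
    _ ≤ ((2 : ℝ) ^ n)⁻¹ * θ := by gcongr; exact hf _ _
    _ = θ / 2 ^ n := inv_mul_eq_div _ _

variable [CompleteSpace E]

noncomputable def limit (f : M → E) (x : M) : E :=
  limUnder atTop (seq f x)

theorem tendsto_seq_limit (hf : ∀ x y, ‖f (x + y) - f x - f y‖ ≤ θ) (x : M) :
    Tendsto (seq f x) atTop (𝓝 (limit f x)) := by
  have hcauchy : CauchySeq (seq f x) := cauchySeq_of_le_geometric_two fun n => by
    rw [dist_eq_norm]; exact norm_seq_sub_seq_succ_le hf x n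
  exact hcauchy.tendsto_limUnder

theorem norm_sub_limit_le (hf : ∀ x y, ‖f (x + y) - f x - f y‖ ≤ θ) (x : M) :
    ‖f x - limit f x‖ ≤ θ := by
  have hbound := dist_le_of_le_geometric_two_of_tendsto₀ (fun n => by
    rw [dist_eq_norm]; exact norm_seq_sub_seq_succ_le hf x n) (tendsto_seq_limit hf x)
  simpa [seq, dist_eq_norm] using hbound

theorem limit_add (hf : ∀ x y, ‖f (x + y) - f x - f y‖ ≤ θ) (x y : M) :
    limit f (x + y) = limit f x + limit f y := by
  have hdefect : Tendsto (fun n => seq f (x + y) n - seq f x n - seq f y n) atTop (𝓝 0) := by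
    refine squeeze_zero_norm (norm_seq_add_sub_le hf x y) ?_
    simpa using tendsto_const_nhds.div_atTop (tendsto_pow_atTop_atTop_of_one_lt one_lt_two)
  have hsum := hdefect.add ((tendsto_seq_limit hf x).add (tendsto_seq_limit hf y))
  simp only [sub_sub, sub_add_cancel, zero_add] at hsum
  exact tendsto_nhds_unique (tendsto_seq_limit hf (x + y)) hsum

noncomputable def limitHom (hf : ∀ x y, ‖f (x + y) - f x - f y‖ ≤ θ) : M →+ E :=
  AddMonoidHom.mk' (limit f) (limit_add hf)

end Hyers

namespace AddMonoidHom

variable {E : Type*} [AddCommGroup E]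

def extendNNReal (G : ℝ≥0 →+ E) : ℝ →+ E :=
  AddMonoidHom.mk' (fun x => G x.toNNReal - G (-x).toNNReal) fun x y => by
    have hsplit : (x + y).toNNReal + (-x).toNNReal + (-y).toNNReal =
        x.toNNReal + y.toNNReal + (-(x + y)).toNNReal := by
      apply NNReal.coe_injective
      push_cast [Real.coe_toNNReal']
      linarith [max_zero_sub_max_neg_zero_eq_self x, max_zero_sub_max_neg_zero_eq_self y,
        max_zero_sub_max_neg_zero_eq_self (x + y)]
    have hsplitG := congrArg G hsplit
    simp only [map_add] at hsplitG
    rw [← sub_eq_zero, ← sub_eq_zero.mpr hsplitG]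
    abel

theorem extendNNReal_coe (G : ℝ≥0 →+ E) (x : ℝ≥0) : G.extendNNReal x = G x := by
  rw [extendNNReal, mk'_apply, Real.toNNReal_of_nonpos (neg_nonpos.mpr x.coe_nonneg), map_zero,
    sub_zero, Real.toNNReal_coe]

end AddMonoidHom

theorem hyers_stability_nonneg_general (θ : ℝ) (g : ℝ → ℂ)
    (h : ∀ x y : ℝ, 0 ≤ x → 0 ≤ y →
      ‖g (x + y) - g x - g y‖ ≤ θ) :
    ∃ G : ℝ → ℂ,
      (∀ x y : ℝ, G (x + y) = G x + G y) ∧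
      (∀ x : ℝ, 0 ≤ x → ‖g x - G x‖ ≤ θ) := by
  set f : ℝ≥0 → ℂ := fun x => g x
  have hf : ∀ x y, ‖f (x + y) - f x - f y‖ ≤ θ := fun x y => h x y x.2 y.2
  refine ⟨(Hyers.limitHom hf).extendNNReal, map_add _, fun x hx => ?_⟩
  lift x to ℝ≥0 using hx
  rw [AddMonoidHom.extendNNReal_coe]
  exact Hyers.norm_sub_limit_le hf x

/-- If `g` is θ-additive on the nonnegative reals, then there is an additive
function `G : ℝ → ℂ` with `|g(x) − G(x)| ≤ θ` for all `x ≥ 0`. -/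
theorem hyers_stability_nonneg (θ : ℝ) (hθ : 0 ≤ θ) (g : ℝ → ℂ)
    (h : ∀ x y : ℝ, 0 ≤ x → 0 ≤ y →
      ‖g (x + y) - g x - g y‖ ≤ θ) :
    ∃ G : ℝ → ℂ,
      (∀ x y : ℝ, G (x + y) = G x + G y) ∧
      (∀ x : ℝ, 0 ≤ x → ‖g x - G x‖ ≤ θ) :=
  hyers_stability_nonneg_general θ g h
end

section
/- Let Y_p, Y_q be ℝ^d-valued random vectors with densities p, q and finite second moments, and suppose |p(y) − q(y)| ≤ B for all y and some B > 0. Then ∫ |p(y) − q(y)| dy ≤ 4 T^d B + 2d E[‖Y_p‖₁²]/T² for every T > 0; in particular, choosing T = B^{−1/(d+3)}, the L¹ distance is at most 4 B^{3/(d+3)} + 2d E[‖Y_p‖₁²] B^{2/(d+3)}. -/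
/-!
On the ℓ¹-ball of radius `T`, whose volume `2ᵈTᵈ/d!` is at most `2Tᵈ`, the pointwise bound gives
`∫ |p - q| ≤ 2BTᵈ`. Outside it, `|p - q| ≤ p + q`, and since `p` and `q` have equal mass, the
mass of `q` outside the ball exceeds that of `p` by at most the ball contribution; the mass of
`p` outside the ball is at most `E[‖Y_p‖₁²]/T²` by Chebyshev. Choosing `T = B^(-1/(d+3))`
gives the second bound.
-/

open MeasureTheory

theorem Nat.two_pow_le_two_mul_factorial : ∀ n : ℕ, 2 ^ n ≤ 2 * n.factorial
  | 0 => by norm_num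
  | n + 1 => by
    have := @Nat.factorial_mul_pow_le_factorial 1 n
    rw [Nat.pow_succ, Nat.mul_comm, Nat.add_comm]
    simpa using Nat.mul_le_mul_left 2 this

theorem volume_sum_abs_le_le (ι : Type*) [Fintype ι] {r : ℝ} (hr : 0 ≤ r) :
    volume {x : ι → ℝ | ∑ i, |x i| ≤ r} ≤ ENNReal.ofReal (2 * r ^ Fintype.card ι) := by
  cases isEmpty_or_nonempty ι
  · simp [hr, volume_pi]
  · have hvol := volume_sum_rpow_le ι le_rfl r
    simp only [Real.rpow_one, div_one, Real.Gamma_nat_eq_factorial,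
      show (1 : ℝ) + 1 = 2 by norm_num, Real.Gamma_two, mul_one] at hvol
    rw [hvol, ← ENNReal.ofReal_pow hr, ← ENNReal.ofReal_mul (by positivity)]
    refine ENNReal.ofReal_le_ofReal ?_
    have hfac : (2 : ℝ) ^ Fintype.card ι ≤ 2 * (Fintype.card ι).factorial := by
      exact_mod_cast Nat.two_pow_le_two_mul_factorial _
    rw [mul_comm]
    gcongr
    rw [div_le_iff₀ (by positivity)]
    exact hfac

theorem setIntegral_sum_abs_le_le_of_abs_le (ι : Type*) [Fintype ι] {f : (ι → ℝ) → ℝ} {B r : ℝ}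
    (hf : ∀ x, |f x| ≤ B) (hr : 0 ≤ r) :
    ∫ x in {x : ι → ℝ | ∑ i, |x i| ≤ r}, |f x| ≤ 2 * r ^ Fintype.card ι * B := by
  have hvol := volume_sum_abs_le_le ι hr
  calc ∫ x in {x : ι → ℝ | ∑ i, |x i| ≤ r}, |f x|
      ≤ B * volume.real {x : ι → ℝ | ∑ i, |x i| ≤ r} :=
        (Real.le_norm_self _).trans <| norm_setIntegral_le_of_norm_le_const
          (hvol.trans_lt ENNReal.ofReal_lt_top) fun x _ => by simpa using hf x
    _ ≤ B * (2 * r ^ Fintype.card ι) := by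
        gcongr
        · exact (abs_nonneg _).trans (hf 0)
        · exact ENNReal.toReal_le_of_le_ofReal (by positivity) hvol
    _ = 2 * r ^ Fintype.card ι * B := mul_comm _ _

section

variable {α : Type*} [MeasurableSpace α] {μ : Measure α}

theorem setIntegral_lt_le_integral_sq_mul_div {N p : α → ℝ} (hN : Measurable N)
    (hp0 : ∀ x, 0 ≤ p x) (hNp : Integrable (fun x => N x ^ 2 * p x) μ) {T : ℝ} (hT : 0 < T) :
    ∫ x in {x | T < N x}, p x ∂μ ≤ (∫ x, N x ^ 2 * p x ∂μ) / T ^ 2 := by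
  have hS : MeasurableSet {x | T < N x} := measurableSet_lt measurable_const hN
  calc ∫ x in {x | T < N x}, p x ∂μ
      ≤ ∫ x in {x | T < N x}, N x ^ 2 * p x / T ^ 2 ∂μ := by
        refine integral_mono_of_nonneg (.of_forall hp0) (hNp.div_const _).integrableOn
          (ae_restrict_of_forall_mem hS fun x hx => ?_)
        rw [le_div_iff₀ (by positivity), mul_comm]
        gcongr
        · exact hp0 x
        · exact hx.le
    _ = (∫ x in {x | T < N x}, N x ^ 2 * p x ∂μ) / T ^ 2 := integral_div _ _
    _ ≤ (∫ x, N x ^ 2 * p x ∂μ) / T ^ 2 := by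
        gcongr ?_ / _
        exact setIntegral_le_integral hNp (.of_forall fun x => mul_nonneg (sq_nonneg _) (hp0 x))

theorem integral_abs_sub_le_of_integral_eq {p q : α → ℝ} (hp : Integrable p μ)
    (hq : Integrable q μ) (hp0 : ∀ x, 0 ≤ p x) (hq0 : ∀ x, 0 ≤ q x)
    (hpq : ∫ x, p x ∂μ = ∫ x, q x ∂μ) {S : Set α} (hS : MeasurableSet S) :
    ∫ x, |p x - q x| ∂μ ≤ 2 * ∫ x in S, |p x - q x| ∂μ + 2 * ∫ x in Sᶜ, p x ∂μ := by
  have hpq' : Integrable (fun x => |p x - q x|) μ := (hp.sub hq).abs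
  have hsplit := integral_add_compl hS hpq'
  have hout : ∫ x in Sᶜ, |p x - q x| ∂μ ≤ ∫ x in Sᶜ, p x ∂μ + ∫ x in Sᶜ, q x ∂μ := by
    rw [← integral_add hp.integrableOn hq.integrableOn]
    refine setIntegral_mono_on hpq'.integrableOn (hp.integrableOn.add hq.integrableOn) hS.compl
      fun x _ => abs_sub_le_iff.mpr ⟨?_, ?_⟩ <;> linarith [hp0 x, hq0 x]
  -- equal total masses: what `q` has in excess outside `S` it lacks inside `S`
  have hmass : ∫ x in Sᶜ, q x ∂μ - ∫ x in Sᶜ, p x ∂μ ≤ ∫ x in S, |p x - q x| ∂μ := by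
    have hin : ∫ x in S, p x ∂μ - ∫ x in S, q x ∂μ ≤ ∫ x in S, |p x - q x| ∂μ := by
      rw [← integral_sub hp.integrableOn hq.integrableOn]
      exact integral_mono (hp.integrableOn.sub hq.integrableOn) hpq'.integrableOn
        fun x => le_abs_self _
    linarith [integral_add_compl hS hp, integral_add_compl hS hq]
  linarith

end

theorem rpow_neg_one_div_pow_mul_self {B : ℝ} (hB : 0 < B) (d : ℕ) :
    (B ^ (-1 / (d + 3 : ℝ))) ^ d * B = B ^ (3 / (d + 3 : ℝ)) := by
  rw [← Real.rpow_natCast, ← Real.rpow_mul hB.le, ← Real.rpow_add_one hB.ne']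
  congr 1
  field_simp
  ring

theorem div_rpow_neg_one_div_sq {B : ℝ} (hB : 0 < B) (d : ℕ) (x : ℝ) :
    x / (B ^ (-1 / (d + 3 : ℝ))) ^ 2 = x * B ^ (2 / (d + 3 : ℝ)) := by
  rw [← Real.rpow_natCast, ← Real.rpow_mul hB.le, div_eq_mul_inv, ← Real.rpow_neg hB.le]
  congr 2
  push_cast
  ring

theorem pointwise_pdf_to_L1_general (d : ℕ) (p q : (Fin d → ℝ) → ℝ)
    (hp0 : ∀ y, 0 ≤ p y) (hq0 : ∀ y, 0 ≤ q y)
    (hpint : ∫ y, p y = 1) (hqint : ∫ y, q y = 1)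
    (hmomp : Integrable (fun y => (∑ i, |y i|) ^ 2 * p y))
    (B : ℝ) (hB : 0 < B) (hpq : ∀ y, |p y - q y| ≤ B) :
    (∀ T : ℝ, 0 < T →
      (∫ y, |p y - q y|)
        ≤ 4 * T ^ d * B + 2 * d * (∫ y, (∑ i, |y i|) ^ 2 * p y) / T ^ 2) ∧
    (∫ y, |p y - q y|)
      ≤ 4 * B ^ ((3 : ℝ) / (d + 3))
        + 2 * d * (∫ y, (∑ i, |y i|) ^ 2 * p y) * B ^ ((2 : ℝ) / (d + 3)) := by
  set M := ∫ y, (∑ i, |y i|) ^ 2 * p y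
  have hIp : Integrable p := .of_integral_ne_zero (by simp [hpint])
  have hIq : Integrable q := .of_integral_ne_zero (by simp [hqint])
  have hnorm : Measurable fun y : Fin d → ℝ => ∑ i, |y i| := by fun_prop
  -- the factor `d` is slack: the moment is already the ℓ¹ one, and it vanishes when `d = 0`
  have hM : M ≤ d * M := by
    rcases Nat.eq_zero_or_pos d with rfl | hd
    · simp [M]
    · exact le_mul_of_one_le_left (integral_nonneg fun y => mul_nonneg (sq_nonneg _) (hp0 y))
        (by exact_mod_cast hd)
  have hbound (T : ℝ) (hT : 0 < T) : (∫ y, |p y - q y|) ≤ 4 * T ^ d * B + 2 * d * M / T ^ 2 := by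
    have hcompl : {y : Fin d → ℝ | ∑ i, |y i| ≤ T}ᶜ = {y | T < ∑ i, |y i|} := by ext; simp
    have hinner := setIntegral_sum_abs_le_le_of_abs_le (Fin d) hpq hT.le
    have htail := setIntegral_lt_le_integral_sq_mul_div hnorm hp0 hmomp hT
    rw [Fintype.card_fin] at hinner
    rw [← hcompl] at htail
    have hsplit := integral_abs_sub_le_of_integral_eq hIp hIq hp0 hq0 (hpint.trans hqint.symm)
      (measurableSet_le hnorm (measurable_const (a := T)))
    have hMT : M / T ^ 2 ≤ d * M / T ^ 2 := by gcongr
    rw [mul_assoc 2 (d : ℝ), mul_div_assoc]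
    linarith
  refine ⟨hbound, ?_⟩
  have h := hbound _ (Real.rpow_pos_of_pos hB (-1 / (d + 3)))
  rwa [mul_assoc 4, rpow_neg_one_div_pow_mul_self hB, div_rpow_neg_one_div_sq hB] at h

/-- Pointwise-to-L¹ bound: if densities `p, q` on ℝ^d with finite second
moments satisfy `|p(y) − q(y)| ≤ B` pointwise, then for every `T > 0`
`∫|p−q| ≤ 4 T^d B + 2d E[‖Y_p‖₁²]/T²`; in particular, with
`T = B^{−1/(d+3)}`, `∫|p−q| ≤ 4 B^{3/(d+3)} + 2d E[‖Y_p‖₁²] B^{2/(d+3)}`. -/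
theorem pointwise_pdf_to_L1 (d : ℕ) (p q : (Fin d → ℝ) → ℝ)
    (hp : Measurable p) (hq : Measurable q)
    (hp0 : ∀ y, 0 ≤ p y) (hq0 : ∀ y, 0 ≤ q y)
    (hpint : ∫ y, p y = 1) (hqint : ∫ y, q y = 1)
    (hmomp : Integrable (fun y => (∑ i, |y i|) ^ 2 * p y))
    (hmomq : Integrable (fun y => (∑ i, |y i|) ^ 2 * q y))
    (B : ℝ) (hB : 0 < B) (hpq : ∀ y, |p y - q y| ≤ B) :
    (∀ T : ℝ, 0 < T →
      (∫ y, |p y - q y|)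
        ≤ 4 * T ^ d * B + 2 * d * (∫ y, (∑ i, |y i|) ^ 2 * p y) / T ^ 2) ∧
    (∫ y, |p y - q y|)
      ≤ 4 * B ^ ((3 : ℝ) / (d + 3))
        + 2 * d * (∫ y, (∑ i, |y i|) ^ 2 * p y) * B ^ ((2 : ℝ) / (d + 3)) :=
  pointwise_pdf_to_L1_general d p q hp0 hq0 hpint hqint hmomp B hB hpq
end
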